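/- Let M ∈ ℝ^{4m×4n} be a JRS-symmetric matrix. Then there exists an orthogonally JRS-symplectic matrix W ∈ ℝ^{4m×4m} such that Wᵀ M = R ∈ ℝ^{4m×4n} is an upper JRS-triangular matrix. -/

import Mathlib

open Matrix Quaternion
open scoped Kronecker Quaternion

noncomputable section

/-- The 4×4 coefficient matrix of `J`. -/
def Jb : Matrix (Fin 4) (Fin 4) ℝ := !![0,0,-1,0; 0,0,0,-1; 1,0,0,0; 0,1,0,0]
/-- The 4×4 coefficient matrix of `R`. -/
def Rb : Matrix (Fin 4) (Fin 4) ℝ := !![0,-1,0,0; 1,0,0,0; 0,0,0,1; 0,0,-1,0]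
/-- The 4×4 coefficient matrix of `S`. -/
def Sb : Matrix (Fin 4) (Fin 4) ℝ := !![0,0,0,-1; 0,0,1,0; 0,-1,0,0; 1,0,0,0]

/-- `J_n = [[0,0,−I_n,0],[0,0,0,−I_n],[I_n,0,0,0],[0,I_n,0,0]]`. -/
def JJ (n : ℕ) : Matrix (Fin 4 × Fin n) (Fin 4 × Fin n) ℝ :=
  Jb ⊗ₖ (1 : Matrix (Fin n) (Fin n) ℝ)
/-- `R_n = [[0,−I_n,0,0],[I_n,0,0,0],[0,0,0,I_n],[0,0,−I_n,0]]`. -/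
def RRm (n : ℕ) : Matrix (Fin 4 × Fin n) (Fin 4 × Fin n) ℝ :=
  Rb ⊗ₖ (1 : Matrix (Fin n) (Fin n) ℝ)
/-- `S_n = [[0,0,0,−I_n],[0,0,I_n,0],[0,−I_n,0,0],[I_n,0,0,0]]`. -/
def SSm (n : ℕ) : Matrix (Fin 4 × Fin n) (Fin 4 × Fin n) ℝ :=
  Sb ⊗ₖ (1 : Matrix (Fin n) (Fin n) ℝ)

/-- A real 4m×4n matrix `M` is JRS-symmetric if `J_m M J_nᵀ = M`,
`R_m M R_nᵀ = M` and `S_m M S_nᵀ = M`. -/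
def JRSSymmetric {m n : ℕ} (M : Matrix (Fin 4 × Fin m) (Fin 4 × Fin n) ℝ) : Prop :=
  JJ m * M * (JJ n)ᵀ = M ∧ RRm m * M * (RRm n)ᵀ = M ∧ SSm m * M * (SSm n)ᵀ = M

/-- A real 4m×4n matrix `O` is JRS-symplectic if `O J_n Oᵀ = J_m`,
`O R_n Oᵀ = R_m` and `O S_n Oᵀ = S_m`. -/
def JRSSymplectic {m n : ℕ} (O : Matrix (Fin 4 × Fin m) (Fin 4 × Fin n) ℝ) : Prop :=
  O * JJ n * Oᵀ = JJ m ∧ O * RRm n * Oᵀ = RRm m ∧ O * SSm n * Oᵀ = SSm m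

/-- A real 4n×4n matrix is orthogonally JRS-symplectic if it is orthogonal
and JRS-symplectic. -/
def OrthoJRSSymplectic {n : ℕ} (W : Matrix (Fin 4 × Fin n) (Fin 4 × Fin n) ℝ) : Prop :=
  Wᵀ * W = 1 ∧ JRSSymplectic W

/-- The 4m×4n block matrix
`[[Q₀,Q₂,Q₁,Q₃],[−Q₂,Q₀,Q₃,−Q₁],[−Q₁,−Q₃,Q₀,Q₂],[−Q₃,Q₁,−Q₂,Q₀]]`. -/
def upsilonBlocks {m n : ℕ} (Q0 Q1 Q2 Q3 : Matrix (Fin m) (Fin n) ℝ) :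
    Matrix (Fin 4 × Fin m) (Fin 4 × Fin n) ℝ := fun p q =>
  !![Q0 p.2 q.2, Q2 p.2 q.2, Q1 p.2 q.2, Q3 p.2 q.2;
     -(Q2 p.2 q.2), Q0 p.2 q.2, Q3 p.2 q.2, -(Q1 p.2 q.2);
     -(Q1 p.2 q.2), -(Q3 p.2 q.2), Q0 p.2 q.2, Q2 p.2 q.2;
     -(Q3 p.2 q.2), Q1 p.2 q.2, -(Q2 p.2 q.2), Q0 p.2 q.2] p.1 q.1

/-- The real counterpart `Υ_Q` of a quaternion matrix `Q`. -/
def Upsilon {m n : ℕ} (Q : Matrix (Fin m) (Fin n) ℍ[ℝ]) :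
    Matrix (Fin 4 × Fin m) (Fin 4 × Fin n) ℝ :=
  upsilonBlocks (fun i j => (Q i j).re) (fun i j => (Q i j).imI)
    (fun i j => (Q i j).imJ) (fun i j => (Q i j).imK)

/-- Upper Hessenberg: zero below the first subdiagonal. -/
def UpperHessenbergM {n : ℕ} (A : Matrix (Fin n) (Fin n) ℝ) : Prop :=
  ∀ i j : Fin n, (j : ℕ) + 1 < (i : ℕ) → A i j = 0

/-- Upper triangular: zero below the diagonal. -/
def UpperTriangularM {m n : ℕ} (A : Matrix (Fin m) (Fin n) ℝ) : Prop :=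
  ∀ (i : Fin m) (j : Fin n), (j : ℕ) < (i : ℕ) → A i j = 0

/-- Strictly upper triangular: zero on and below the diagonal. -/
def StrictlyUpperTriangularM {m n : ℕ} (A : Matrix (Fin m) (Fin n) ℝ) : Prop :=
  ∀ (i : Fin m) (j : Fin n), (j : ℕ) ≤ (i : ℕ) → A i j = 0

/-- Tridiagonal: zero outside the three central diagonals. -/
def TridiagonalM {n : ℕ} (A : Matrix (Fin n) (Fin n) ℝ) : Prop :=
  ∀ i j : Fin n, ((i : ℕ) + 1 < (j : ℕ) ∨ (j : ℕ) + 1 < (i : ℕ)) → A i j = 0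

/-!
A JRS-symmetric matrix is the real counterpart `Υ_Q` of a quaternion matrix `Q`: each of its
4×4 blocks commutes with `Jb`, `Rb`, `Sb`, the matrices of left multiplication by `i`, `j`, `k`,
so it is the matrix of a right multiplication. `Υ` is multiplicative and turns conjugate
transposes into transposes, so the counterpart of a quaternion unitary matrix is orthogonal and
commutes with `J`, `R`, `S`, i.e. is orthogonally JRS-symplectic. It remains to triangularise `Q`
by a unitary matrix, column by column: a diagonal phase makes the pivot real and a Householder
reflection then clears the entries below it.
-/

-- In the coordinates `(re, imJ, imI, imK)`, `quatToMatrix q` is the matrix of `x ↦ x * star q`.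
def quatToMatrix {R : Type*} [CommRing R] : ℍ[R] →+* Matrix (Fin 4) (Fin 4) R where
  toFun q := !![q.re, q.imJ, q.imI, q.imK;
     -q.imJ, q.re, q.imK, -q.imI;
     -q.imI, -q.imK, q.re, q.imJ;
     -q.imK, q.imI, -q.imJ, q.re]
  map_one' := by ext a b; fin_cases a <;> fin_cases b <;> simp
  map_mul' p q := by
    ext a b; fin_cases a <;> fin_cases b <;> simp [Matrix.mul_apply, Fin.sum_univ_four] <;> ring
  map_zero' := by ext a b; fin_cases a <;> fin_cases b <;> simp
  map_add' p q := by ext a b; fin_cases a <;> fin_cases b <;> simp <;> ring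

theorem quatToMatrix_star {R : Type*} [CommRing R] (q : ℍ[R]) :
    quatToMatrix (star q) = (quatToMatrix q)ᵀ := by
  ext a b; fin_cases a <;> fin_cases b <;> simp [quatToMatrix]

theorem Jb_mul_quatToMatrix (q : ℍ[ℝ]) : Jb * quatToMatrix q = quatToMatrix q * Jb := by
  ext a b
  fin_cases a <;> fin_cases b <;> simp [quatToMatrix, Jb, Matrix.mul_apply, Fin.sum_univ_four]

theorem Rb_mul_quatToMatrix (q : ℍ[ℝ]) : Rb * quatToMatrix q = quatToMatrix q * Rb := by
  ext a b
  fin_cases a <;> fin_cases b <;> simp [quatToMatrix, Rb, Matrix.mul_apply, Fin.sum_univ_four]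

theorem Sb_mul_quatToMatrix (q : ℍ[ℝ]) : Sb * quatToMatrix q = quatToMatrix q * Sb := by
  ext a b
  fin_cases a <;> fin_cases b <;> simp [quatToMatrix, Sb, Matrix.mul_apply, Fin.sum_univ_four]

section Upsilon

variable {l m n : ℕ}

theorem Upsilon_apply (Q : Matrix (Fin m) (Fin n) ℍ[ℝ]) (p : Fin 4 × Fin m) (r : Fin 4 × Fin n) :
    Upsilon Q p r = quatToMatrix (Q p.2 r.2) p.1 r.1 := rfl

theorem Upsilon_mul (A : Matrix (Fin l) (Fin m) ℍ[ℝ]) (B : Matrix (Fin m) (Fin n) ℍ[ℝ]) :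
    Upsilon (A * B) = Upsilon A * Upsilon B := by
  ext ⟨a, i⟩ ⟨b, j⟩
  simp only [Upsilon_apply, Matrix.mul_apply, map_sum, map_mul, Matrix.sum_apply,
    Fintype.sum_prod_type]
  exact Finset.sum_comm

theorem Upsilon_one : Upsilon (1 : Matrix (Fin m) (Fin m) ℍ[ℝ]) = 1 := by
  ext ⟨a, i⟩ ⟨b, j⟩
  rw [Upsilon_apply]
  obtain rfl | h := eq_or_ne i j
  · simp [Matrix.one_apply]
  · simp [h]

theorem Upsilon_conjTranspose (A : Matrix (Fin m) (Fin n) ℍ[ℝ]) :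
    Upsilon Aᴴ = (Upsilon A)ᵀ := by
  ext ⟨a, i⟩ ⟨b, j⟩
  simp [Upsilon_apply, quatToMatrix_star]

end Upsilon

theorem kronecker_one_mul_mul_kronecker_one_transpose_submatrix {R ι κ μ ν : Type*}
    [CommSemiring R] [Fintype ι] [Fintype κ] [Fintype μ] [Fintype ν] [DecidableEq μ]
    [DecidableEq ν] (K : Matrix ι ι R) (L : Matrix κ κ R) (M : Matrix (ι × μ) (κ × ν) R)
    (i : μ) (j : ν) :
    ((K ⊗ₖ (1 : Matrix μ μ R)) * M * (L ⊗ₖ (1 : Matrix ν ν R))ᵀ).submatrix (·, i) (·, j) =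
      K * M.submatrix (·, i) (·, j) * Lᵀ := by
  ext a b
  simp [Matrix.mul_apply, Fintype.sum_prod_type, Matrix.one_apply, Finset.sum_mul]

theorem eq_quatToMatrix_of_JRS (B : Matrix (Fin 4) (Fin 4) ℝ) (hJ : Jb * B * Jbᵀ = B)
    (hR : Rb * B * Rbᵀ = B) (hS : Sb * B * Sbᵀ = B) :
    B = quatToMatrix ⟨B 0 0, B 0 2, B 0 1, B 0 3⟩ := by
  simp only [← Matrix.ext_iff, Fin.forall_fin_succ, IsEmpty.forall_iff, and_true] at hJ hR hS
  simp [Matrix.mul_apply, Fin.sum_univ_four, Jb, Rb, Sb] at hJ hR hS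
  ext a b
  fin_cases a <;> fin_cases b <;> simp [quatToMatrix] <;> linarith

theorem JRSSymmetric.exists_eq_Upsilon {m n : ℕ} {M : Matrix (Fin 4 × Fin m) (Fin 4 × Fin n) ℝ}
    (hM : JRSSymmetric M) : ∃ Q, M = Upsilon Q := by
  obtain ⟨hJ, hR, hS⟩ := hM
  have hblock {K : Matrix (Fin 4) (Fin 4) ℝ}
      (h : K ⊗ₖ (1 : Matrix (Fin m) (Fin m) ℝ) * M * (K ⊗ₖ (1 : Matrix (Fin n) (Fin n) ℝ))ᵀ = M)
      (i : Fin m) (j : Fin n) :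
      K * M.submatrix (·, i) (·, j) * Kᵀ = M.submatrix (·, i) (·, j) := by
    rw [← kronecker_one_mul_mul_kronecker_one_transpose_submatrix, h]
  refine ⟨fun i j => ⟨M (0, i) (0, j), M (0, i) (2, j), M (0, i) (1, j), M (0, i) (3, j)⟩, ?_⟩
  ext ⟨a, i⟩ ⟨b, j⟩
  exact congrFun₂ (eq_quatToMatrix_of_JRS _ (hblock hJ i j) (hblock hR i j) (hblock hS i j)) a b

theorem kronecker_one_mul_Upsilon {m n : ℕ} {K : Matrix (Fin 4) (Fin 4) ℝ}
    (hK : ∀ q, K * quatToMatrix q = quatToMatrix q * K) (Q : Matrix (Fin m) (Fin n) ℍ[ℝ]) :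
    (K ⊗ₖ (1 : Matrix (Fin m) (Fin m) ℝ)) * Upsilon Q =
      Upsilon Q * (K ⊗ₖ (1 : Matrix (Fin n) (Fin n) ℝ)) := by
  ext ⟨a, i⟩ ⟨b, j⟩
  simpa [Matrix.mul_apply, Fintype.sum_prod_type, Matrix.one_apply, Upsilon_apply]
    using congrFun₂ (hK (Q i j)) a b

theorem orthoJRSSymplectic_Upsilon {m : ℕ} {U : Matrix (Fin m) (Fin m) ℍ[ℝ]}
    (hU : U ∈ unitary (Matrix (Fin m) (Fin m) ℍ[ℝ])) : OrthoJRSSymplectic (Upsilon U) := by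
  have hT : (Upsilon U)ᵀ = Upsilon (star U) := by
    rw [star_eq_conjTranspose, Upsilon_conjTranspose]
  have hconj {K : Matrix (Fin 4) (Fin 4) ℝ} (hK : ∀ q, K * quatToMatrix q = quatToMatrix q * K) :
      Upsilon U * (K ⊗ₖ 1) * (Upsilon U)ᵀ = K ⊗ₖ 1 := by
    rw [← kronecker_one_mul_Upsilon hK, Matrix.mul_assoc, hT, ← Upsilon_mul,
      Unitary.mul_star_self_of_mem hU, Upsilon_one, Matrix.mul_one]
  refine ⟨?_, hconj Jb_mul_quatToMatrix, hconj Rb_mul_quatToMatrix, hconj Sb_mul_quatToMatrix⟩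
  rw [hT, ← Upsilon_mul, Unitary.star_mul_self_of_mem hU, Upsilon_one]

section Householder

variable {ι : Type*}

theorem Quaternion.coe_smul_vec (r : ℝ) (x : ι → ℍ[ℝ]) : (r : ℍ[ℝ]) • x = r • x :=
  funext fun i => Quaternion.coe_mul_eq_smul r (x i)

theorem Quaternion.op_coe_smul_vec (r : ℝ) (x : ι → ℍ[ℝ]) :
    MulOpposite.op (r : ℍ[ℝ]) • x = r • x :=
  funext fun i => Quaternion.mul_coe_eq_smul r (x i)

variable [Fintype ι]

theorem Quaternion.star_dotProduct_self (x : ι → ℍ[ℝ]) :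
    star x ⬝ᵥ x = ((∑ i, normSq (x i) : ℝ) : ℍ[ℝ]) := by
  simp [dotProduct, Quaternion.star_mul_self, ← Quaternion.algebraMap_def, map_sum]

theorem Quaternion.sum_normSq_eq_zero {x : ι → ℍ[ℝ]} : ∑ i, normSq (x i) = 0 ↔ x = 0 := by
  simp [Finset.sum_eq_zero_iff_of_nonneg, funext_iff]

variable [DecidableEq ι]

def householder (w : ι → ℍ[ℝ]) : Matrix ι ι ℍ[ℝ] :=
  1 - (2 / ∑ i, normSq (w i)) • vecMulVec w (star w)

theorem householder_mulVec (w z : ι → ℍ[ℝ]) :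
    householder w *ᵥ z = z - (2 / ∑ i, normSq (w i)) • MulOpposite.op (star w ⬝ᵥ z) • w := by
  simp [householder, Matrix.sub_mulVec, Matrix.smul_mulVec, vecMulVec_mulVec]

theorem householder_mulVec_of_dotProduct_eq_zero {w z : ι → ℍ[ℝ]} (h : star w ⬝ᵥ z = 0) :
    householder w *ᵥ z = z := by
  simp [householder_mulVec, h]

theorem star_householder (w : ι → ℍ[ℝ]) : star (householder w) = householder w := by
  rw [Matrix.star_eq_conjTranspose, householder, Matrix.conjTranspose_sub,
    Matrix.conjTranspose_one]
  congr 1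
  exact Matrix.ext fun i j => by simp [Quaternion.star_smul, Matrix.vecMulVec_apply]

theorem householder_mul_self (w : ι → ℍ[ℝ]) : householder w * householder w = 1 := by
  have hNN : vecMulVec w (star w) * vecMulVec w (star w) =
      (∑ i, normSq (w i)) • vecMulVec w (star w) := by
    rw [vecMulVec_mul_vecMulVec, Quaternion.star_dotProduct_self, Quaternion.coe_smul_vec,
      vecMulVec_smul]
  unfold householder
  set t := ∑ i, normSq (w i)
  simp only [Matrix.sub_mul, Matrix.mul_sub, Matrix.one_mul, Matrix.mul_one,
    Matrix.smul_mul, Matrix.mul_smul, hNN, smul_smul]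
  rcases eq_or_ne t 0 with ht | ht
  · simp [ht]
  · match_scalars <;> field_simp; ring

theorem householder_mem_unitary (w : ι → ℍ[ℝ]) : householder w ∈ unitary (Matrix ι ι ℍ[ℝ]) := by
  simp [Unitary.mem_iff, star_householder, householder_mul_self]

theorem householder_sub_mulVec {x y : ι → ℍ[ℝ]} (hxx : star x ⬝ᵥ x = star y ⬝ᵥ y)
    (hxy : star x ⬝ᵥ y = star y ⬝ᵥ x) : householder (x - y) *ᵥ x = y := by
  rw [householder_mulVec]
  set t := ∑ i, normSq ((x - y) i)
  have hw : star (x - y) ⬝ᵥ x = ((t / 2 : ℝ) : ℍ[ℝ]) := by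
    have h2 : (t : ℍ[ℝ]) = (2 : ℝ) • (star (x - y) ⬝ᵥ x) := by
      rw [← Quaternion.star_dotProduct_self, two_smul]
      simp only [star_sub, sub_dotProduct, dotProduct_sub, hxx, hxy]
      abel
    rw [div_eq_inv_mul, ← Quaternion.smul_coe, h2, smul_smul, inv_mul_cancel₀ two_ne_zero,
      one_smul]
  rcases eq_or_ne t 0 with ht | ht
  · rw [Quaternion.sum_normSq_eq_zero, sub_eq_zero] at ht
    simp [ht]
  · rw [hw, Quaternion.op_coe_smul_vec, smul_smul, div_mul_div_cancel₀ ht, div_self two_ne_zero,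
      one_smul, sub_sub_cancel]

end Householder

theorem Quaternion.exists_mem_unitary_star_mul_eq_norm (a : ℍ[ℝ]) :
    ∃ u ∈ unitary ℍ[ℝ], star u * a = (‖a‖ : ℍ[ℝ]) := by
  rcases eq_or_ne a 0 with rfl | ha
  · exact ⟨1, one_mem _, by simp⟩
  have hna : ‖a‖ ≠ 0 := norm_ne_zero_iff.mpr ha
  refine ⟨‖a‖⁻¹ • a, ?_, ?_⟩
  · rw [Unitary.mem_iff, Quaternion.star_smul, smul_mul_smul_comm, smul_mul_smul_comm,
      Quaternion.star_mul_self, Quaternion.self_mul_star, Quaternion.smul_coe,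
      Quaternion.normSq_eq_norm_mul_self]
    field_simp
    simp
  · rw [Quaternion.star_smul, smul_mul_assoc, Quaternion.star_mul_self, Quaternion.smul_coe,
      Quaternion.normSq_eq_norm_mul_self, inv_mul_cancel_left₀ hna]

theorem Matrix.diagonal_mem_unitary {ι α : Type*} [Fintype ι] [DecidableEq ι] [Semiring α]
    [StarRing α] {d : ι → α} (hd : ∀ i, d i ∈ unitary α) :
    diagonal d ∈ unitary (Matrix ι ι α) := by
  simp only [Unitary.mem_iff, star_eq_conjTranspose, diagonal_conjTranspose,
    diagonal_mul_diagonal, ← diagonal_one]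
  exact ⟨congrArg diagonal (funext fun i => Unitary.star_mul_self_of_mem (hd i)),
    congrArg diagonal (funext fun i => Unitary.mul_star_self_of_mem (hd i))⟩

theorem exists_unitary_star_mulVec_eq_single {ι : Type*} [Fintype ι] [DecidableEq ι]
    {p : ι → Prop} {k : ι} (hk : p k) {v : ι → ℍ[ℝ]} (hv : ∀ i, ¬ p i → v i = 0) :
    ∃ U ∈ unitary (Matrix ι ι ℍ[ℝ]),
      (∀ z : ι → ℍ[ℝ], (∀ i, p i → z i = 0) → star U *ᵥ z = z) ∧
      ∃ r : ℝ, star U *ᵥ v = Pi.single k (r : ℍ[ℝ]) := by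
  obtain ⟨u, hu, huv⟩ := Quaternion.exists_mem_unitary_star_mul_eq_norm (v k)
  set D := diagonal (Function.update 1 k u)
  have hD : D ∈ unitary (Matrix ι ι ℍ[ℝ]) := by
    refine Matrix.diagonal_mem_unitary fun i => ?_
    rcases eq_or_ne i k with rfl | hik
    · simpa using hu
    · simp [hik]
  have hDz (z : ι → ℍ[ℝ]) : star D *ᵥ z = Function.update z k (star u * z k) := by
    ext1 i
    rcases eq_or_ne i k with rfl | hik
    · simp [D, star_eq_conjTranspose, mulVec_diagonal]
    · simp [D, star_eq_conjTranspose, mulVec_diagonal, hik]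
  set x := star D *ᵥ v
  set ν := √(∑ i, normSq (x i))
  set y : ι → ℍ[ℝ] := Pi.single k (ν : ℍ[ℝ])
  have hxk : x k = ‖v k‖ := by simp [x, hDz, huv]
  have hxx : star x ⬝ᵥ x = star y ⬝ᵥ y := by
    rw [Quaternion.star_dotProduct_self]
    simp [y, dotProduct_single, ν, ← Quaternion.coe_mul,
      Real.mul_self_sqrt (Finset.sum_nonneg fun i _ => normSq_nonneg)]
  have hxy : star x ⬝ᵥ y = star y ⬝ᵥ x := by
    simp [y, single_dotProduct, dotProduct_single, hxk, ← Quaternion.coe_mul, mul_comm]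
  refine ⟨D * householder (x - y), mul_mem hD (householder_mem_unitary _), fun z hz => ?_,
    ν, ?_⟩
  · rw [star_mul, star_householder, ← mulVec_mulVec, hDz,
      Function.update_eq_self_iff.mpr (by rw [hz k hk, mul_zero])]
    refine householder_mulVec_of_dotProduct_eq_zero (Finset.sum_eq_zero fun i _ => ?_)
    by_cases hi : p i
    · simp [hz i hi]
    · have hik : i ≠ k := fun h => hi (h ▸ hk)
      simp [x, y, hDz, hik, hv i hi]
  · rw [star_mul, star_householder, ← mulVec_mulVec, householder_sub_mulVec hxx hxy]

section QuaternionQR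

variable {m n : ℕ}

def ColsUpperTriangularRealDiag (k : ℕ) (T : Matrix (Fin m) (Fin n) ℍ[ℝ]) : Prop :=
  ∀ (i : Fin m) (j : Fin n), (j : ℕ) < k → (j : ℕ) ≤ i →
    ∃ r : ℝ, T i j = r ∧ ((j : ℕ) < i → r = 0)

theorem exists_unitary_colsUpperTriangularRealDiag_succ {k : ℕ}
    {T : Matrix (Fin m) (Fin n) ℍ[ℝ]} (hT : ColsUpperTriangularRealDiag k T) :
    ∃ U ∈ unitary (Matrix (Fin m) (Fin m) ℍ[ℝ]),
      ColsUpperTriangularRealDiag (k + 1) (star U * T) := by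
  by_cases hk : k < m ∧ k < n
  swap
  · refine ⟨1, one_mem _, fun i j hj hji => ?_⟩
    rw [star_one, Matrix.one_mul]
    exact hT i j (by omega) hji
  -- `U` sends the part `below` of column `k` to a real multiple of the `k`-th basis vector and
  -- fixes every vector vanishing from row `k` on: `above`, and the earlier columns.
  set kr : Fin m := ⟨k, hk.1⟩
  set kc : Fin n := ⟨k, hk.2⟩
  set below : Fin m → ℍ[ℝ] := fun i => if k ≤ (i : ℕ) then T i kc else 0
  set above : Fin m → ℍ[ℝ] := fun i => if k ≤ (i : ℕ) then 0 else T i kc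
  obtain ⟨U, hU, hfix, r, hUv⟩ := exists_unitary_star_mulVec_eq_single
    (p := fun i : Fin m => k ≤ i) (k := kr) le_rfl (v := below) fun i hi => if_neg hi
  have hcol (j : Fin n) (hj : (j : ℕ) < k) (i : Fin m) : (star U * T) i j = T i j := by
    refine congrFun (hfix (fun l => T l j) fun l hl => ?_) i
    obtain ⟨r, hr, hr0⟩ := hT l j hj (by omega)
    rw [hr, hr0 (by omega), Quaternion.coe_zero]
  have hcolk : (fun i => (star U * T) i kc) = Pi.single kr (r : ℍ[ℝ]) + above := by
    have hsplit : below + above = fun i => T i kc :=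
      funext fun i => by by_cases h : k ≤ (i : ℕ) <;> simp [below, above, h]
    rw [← hUv, ← hfix above fun i hi => if_pos hi, ← mulVec_add, hsplit]
    rfl
  refine ⟨U, hU, fun i j hj hji => ?_⟩
  rcases Nat.lt_or_ge j k with hjk | hjk
  · rw [hcol j hjk]
    exact hT i j hjk hji
  · obtain rfl : j = kc := Fin.ext (by simp [kc]; omega)
    have hi := congrFun hcolk i
    have hki : k ≤ (i : ℕ) := hji
    simp only [Pi.add_apply, above, if_pos hki, add_zero] at hi
    rcases eq_or_ne i kr with rfl | hik
    · exact ⟨r, by simpa using hi, fun h => absurd h (lt_irrefl _)⟩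
    · exact ⟨0, by simpa [hik] using hi, fun _ => rfl⟩

theorem exists_unitary_colsUpperTriangularRealDiag (k : ℕ) (T : Matrix (Fin m) (Fin n) ℍ[ℝ]) :
    ∃ U ∈ unitary (Matrix (Fin m) (Fin m) ℍ[ℝ]),
      ColsUpperTriangularRealDiag k (star U * T) := by
  induction k with
  | zero => exact ⟨1, one_mem _, fun i j hj => absurd hj (Nat.not_lt_zero _)⟩
  | succ k ih =>
    obtain ⟨U, hU, hUT⟩ := ih
    obtain ⟨V, hV, hVUT⟩ := exists_unitary_colsUpperTriangularRealDiag_succ hUT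
    exact ⟨U * V, mul_mem hU hV, by rwa [star_mul, Matrix.mul_assoc]⟩

theorem ColsUpperTriangularRealDiag.upperTriangularM {T : Matrix (Fin m) (Fin n) ℍ[ℝ]}
    (hT : ColsUpperTriangularRealDiag n T) {f : ℍ[ℝ] → ℝ} (hf : f 0 = 0) :
    UpperTriangularM fun i j => f (T i j) := by
  intro i j hji
  obtain ⟨r, hr, hr0⟩ := hT i j j.isLt hji.le
  simp [hr, hr0 hji, hf]

theorem ColsUpperTriangularRealDiag.strictlyUpperTriangularM {T : Matrix (Fin m) (Fin n) ℍ[ℝ]}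
    (hT : ColsUpperTriangularRealDiag n T) {f : ℍ[ℝ] → ℝ} (hf : ∀ r : ℝ, f r = 0) :
    StrictlyUpperTriangularM fun i j => f (T i j) := by
  intro i j hji
  obtain ⟨r, hr, -⟩ := hT i j j.isLt hji
  simp [hr, hf]

end QuaternionQR

/-- JRS-QR decomposition: every JRS-symmetric 4m×4n matrix can
be reduced to upper JRS-triangular form by an orthogonally JRS-symplectic
matrix. -/
theorem jrs_qr_decomposition {m n : ℕ}
    (M : Matrix (Fin 4 × Fin m) (Fin 4 × Fin n) ℝ) (hM : JRSSymmetric M) :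
    ∃ (W : Matrix (Fin 4 × Fin m) (Fin 4 × Fin m) ℝ)
      (R0 R1 R2 R3 : Matrix (Fin m) (Fin n) ℝ),
      OrthoJRSSymplectic W ∧
      Wᵀ * M = upsilonBlocks R0 R1 R2 R3 ∧
      UpperTriangularM R0 ∧
      StrictlyUpperTriangularM R1 ∧ StrictlyUpperTriangularM R2 ∧
      StrictlyUpperTriangularM R3 := by
  obtain ⟨Q, rfl⟩ := hM.exists_eq_Upsilon
  obtain ⟨U, hU, hT⟩ := exists_unitary_colsUpperTriangularRealDiag n Q
  refine ⟨Upsilon U, _, _, _, _, orthoJRSSymplectic_Upsilon hU, ?_,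
    hT.upperTriangularM Quaternion.re_zero, hT.strictlyUpperTriangularM Quaternion.imI_coe,
    hT.strictlyUpperTriangularM Quaternion.imJ_coe,
    hT.strictlyUpperTriangularM Quaternion.imK_coe⟩
  rw [← Upsilon_conjTranspose, ← Upsilon_mul, ← star_eq_conjTranspose]
  rfl
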